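/- arXiv:2103.11559 — 4 statements merged into one kernel-verified Lean document; each statement's English description precedes it below -/
import Mathlib

section
/- If f(x) = g(w^T x) for w, x in R^d where g is smooth and strongly monotone, then the eluder dimension of this function class is O(d); in particular, for the class of linear functions f(x) = w^T x with bounded w on a bounded domain, the ε-eluder dimension is at most O(d log(1/ε) + d). -/
/-!
Each point `xᵢ` of an eluder sequence at scale `ε` comes with a difference `v = w - w'` of two
parameters, `‖v‖ ≤ 2`, such that `∑_{j<i} ⟨v, xⱼ⟩² ≤ ε²` but `|⟨v, xᵢ⟩| > ε`. With the regularised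
Gram matrix `Vᵢ = (ε²/4) I + ∑_{j<i} xⱼ xⱼᵀ` this gives `vᵀ Vᵢ v ≤ 2ε²`, so by Cauchy–Schwarz in the
`Vᵢ`-geometry `xᵢᵀ Vᵢ⁻¹ xᵢ > 1/2`, and by the matrix determinant lemma `det Vᵢ₊₁ ≥ (3/2) det Vᵢ`.
Comparing `(3/2)ⁿ (ε²/4)ᵈ ≤ det Vₙ` with the AM–GM bound `det Vₙ ≤ (tr Vₙ / d)ᵈ ≤ (ε²/4 + n/d)ᵈ`
and taking logarithms gives `n = O(d log(1/ε) + d)`.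
-/

/-- `x` is `ε`-dependent on the list `Z` with respect to the class `F`:
any `f, f' ∈ F` that are `ε`-close on `Z` (in the data norm) are also
`ε`-close at `x`. -/
def EpsDependent {α : Type*} (F : Set (α → ℝ)) (ε : ℝ) (Z : List α) (x : α) : Prop :=
  ∀ f ∈ F, ∀ f' ∈ F,
    Real.sqrt ((Z.map fun z => (f z - f' z) ^ 2).sum) ≤ ε → |f x - f' x| ≤ ε

/-- `L` is an eluder sequence at scale `ε`: for some `ε' ≥ ε`, every element of
`L` is `ε'`-independent of its predecessors.  The `ε`-eluder dimension of `F` is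
the length of the longest such sequence. -/
def EluderSeq {α : Type*} (F : Set (α → ℝ)) (ε : ℝ) (L : List α) : Prop :=
  ∃ ε' ≥ ε, ∀ i : Fin L.length, ¬ EpsDependent F ε' (L.take i.1) (L.get i)

open Finset Matrix Real

theorem List.sum_map_take_eq_sum_range {α M : Type*} [AddCommMonoid M] (L : List α) (g : α → M)
    (a : α) : ∀ i ≤ L.length, ((L.take i).map g).sum = ∑ j ∈ Finset.range i, g (L.getD j a)
  | 0, _ => by simp
  | i + 1, hi => by
    rw [map_take, sum_take_succ _ _ (by simpa using hi), ← map_take,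
      sum_map_take_eq_sum_range L g a i (by omega), Finset.sum_range_succ, getElem_map,
      getD_eq_getElem _ _ (by omega)]

theorem Real.prod_le_sum_div_card_pow {ι : Type*} (s : Finset ι) (z : ι → ℝ)
    (hz : ∀ i ∈ s, 0 ≤ z i) : ∏ i ∈ s, z i ≤ ((∑ i ∈ s, z i) / #s) ^ #s := by
  rcases s.eq_empty_or_nonempty with rfl | hs
  · simp
  have h := geom_mean_le_arith_mean s (fun _ => 1) z (by simp) (by simpa using hs) hz
  simp only [rpow_one, one_mul, sum_const, nsmul_eq_mul, mul_one] at h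
  calc ∏ i ∈ s, z i = ((∏ i ∈ s, z i) ^ (#s : ℝ)⁻¹) ^ #s :=
        (rpow_inv_natCast_pow (prod_nonneg hz) hs.card_pos.ne').symm
    _ ≤ _ := pow_le_pow_left₀ (rpow_nonneg (prod_nonneg hz) _) h _

namespace Matrix

variable {ι : Type*} [Fintype ι]

theorem PosSemidef.dotProduct_mulVec_sq_le {M : Matrix ι ι ℝ} (hM : M.PosSemidef)
    (u v : ι → ℝ) : (u ⬝ᵥ M *ᵥ v) ^ 2 ≤ (u ⬝ᵥ M *ᵥ u) * (v ⬝ᵥ M *ᵥ v) := by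
  let := M.toSeminormedAddCommGroup hM
  let := M.toInnerProductSpace hM
  have hinner (x y : ι → ℝ) : (inner ℝ x y : ℝ) = x ⬝ᵥ M *ᵥ y := by
    change (M *ᵥ y) ⬝ᵥ star x = _
    rw [star_trivial, dotProduct_comm]
  simpa only [hinner, sq] using real_inner_mul_inner_self_le u v

theorem PosSemidef.det_le_trace_div_card_pow [DecidableEq ι] {M : Matrix ι ι ℝ}
    (hM : M.PosSemidef) : M.det ≤ (M.trace / Fintype.card ι) ^ Fintype.card ι := by
  rw [hM.isHermitian.det_eq_prod_eigenvalues, hM.isHermitian.trace_eq_sum_eigenvalues]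
  simpa using prod_le_sum_div_card_pow univ _ fun i _ => hM.eigenvalues_nonneg i

variable [DecidableEq ι]

theorem PosDef.dotProduct_sq_le_mul_inv {M : Matrix ι ι ℝ} (hM : M.PosDef) (u x : ι → ℝ) :
    (u ⬝ᵥ x) ^ 2 ≤ (u ⬝ᵥ M *ᵥ u) * (x ⬝ᵥ M⁻¹ *ᵥ x) := by
  have hx : M *ᵥ (M⁻¹ *ᵥ x) = x := by
    rw [mulVec_mulVec, mul_nonsing_inv _ hM.det_pos.ne'.isUnit, one_mulVec]
  have h := hM.posSemidef.dotProduct_mulVec_sq_le u (M⁻¹ *ᵥ x)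
  rwa [hx, dotProduct_comm (M⁻¹ *ᵥ x)] at h

theorem PosDef.half_lt_dotProduct_inv_mulVec {M : Matrix ι ι ℝ} (hM : M.PosDef) {u x : ι → ℝ}
    (h : u ⬝ᵥ M *ᵥ u < 2 * (x ⬝ᵥ u) ^ 2) : 1 / 2 < x ⬝ᵥ M⁻¹ *ᵥ x := by
  have hcs := hM.dotProduct_sq_le_mul_inv u x
  have hu : 0 ≤ u ⬝ᵥ M *ᵥ u := by simpa using hM.posSemidef.dotProduct_mulVec_nonneg u
  rw [dotProduct_comm] at hcs
  nlinarith

theorem det_add_vecMulVec {A : Matrix ι ι ℝ} (hA : IsUnit A.det) (u v : ι → ℝ) :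
    (A + vecMulVec u v).det = A.det * (1 + v ⬝ᵥ A⁻¹ *ᵥ u) := by
  rw [vecMulVec_eq Unit, det_add_replicateCol_mul_replicateRow hA, Matrix.mul_assoc,
    det_unique (n := Unit)]
  simp [Matrix.mul_apply, dotProduct, mulVec]

end Matrix

section RegularizedGram

variable {ι : Type*} [DecidableEq ι]

noncomputable def regularizedGram (l : ℝ) (x : ℕ → ι → ℝ) (k : ℕ) : Matrix ι ι ℝ :=
  l • 1 + ∑ j ∈ range k, vecMulVec (x j) (x j)

variable {l : ℝ} {x : ℕ → ι → ℝ}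

@[simp] theorem regularizedGram_zero : regularizedGram l x 0 = l • 1 := by
  simp [regularizedGram]

theorem regularizedGram_succ (k : ℕ) :
    regularizedGram l x (k + 1) = regularizedGram l x k + vecMulVec (x k) (x k) := by
  rw [regularizedGram, regularizedGram, sum_range_succ, add_assoc]

variable [Fintype ι]

theorem dotProduct_regularizedGram_mulVec (k : ℕ) (v : ι → ℝ) :
    v ⬝ᵥ regularizedGram l x k *ᵥ v = l * (v ⬝ᵥ v) + ∑ j ∈ range k, (x j ⬝ᵥ v) ^ 2 := by
  simp [regularizedGram, add_mulVec, smul_mulVec, sum_mulVec, dotProduct_sum, vecMulVec_mulVec,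
    sq, dotProduct_comm v (x _)]

theorem trace_regularizedGram (k : ℕ) :
    (regularizedGram l x k).trace = l * Fintype.card ι + ∑ j ∈ range k, x j ⬝ᵥ x j := by
  simp [regularizedGram, trace_sum, trace_vecMulVec]

theorem posDef_regularizedGram (hl : 0 < l) (k : ℕ) : (regularizedGram l x k).PosDef :=
  (PosDef.one.smul hl).add_posSemidef <|
    posSemidef_sum _ fun j _ => by simpa using posSemidef_vecMulVec_self_star (x j)

theorem three_halves_pow_mul_le_det_regularizedGram (hl : 0 < l) {n : ℕ}
    (hlev : ∀ k < n, 1 / 2 < x k ⬝ᵥ (regularizedGram l x k)⁻¹ *ᵥ x k) :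
    (3 / 2) ^ n * l ^ Fintype.card ι ≤ (regularizedGram l x n).det := by
  induction n with
  | zero => simp
  | succ k ih =>
    have hdet := (posDef_regularizedGram hl k (x := x)).det_pos
    rw [regularizedGram_succ, det_add_vecMulVec hdet.ne'.isUnit, pow_succ]
    nlinarith [ih fun j hj => hlev j (by omega), hlev k (by omega)]

theorem det_regularizedGram_le (hl : 0 < l) {n : ℕ} (hx : ∀ j < n, x j ⬝ᵥ x j ≤ 1) :
    (regularizedGram l x n).det ≤ (l + n / Fintype.card ι) ^ Fintype.card ι := by
  refine (posDef_regularizedGram hl n).posSemidef.det_le_trace_div_card_pow.trans ?_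
  rcases Nat.eq_zero_or_pos (Fintype.card ι) with hc | hc
  · simp [hc]
  have htrace : (regularizedGram l x n).trace ≤ l * Fintype.card ι + n := by
    rw [trace_regularizedGram]
    simpa using sum_le_sum fun j hj => hx j (mem_range.mp hj)
  gcongr
  · exact div_nonneg (posDef_regularizedGram hl n).posSemidef.trace_nonneg (by positivity)
  · rwa [div_le_iff₀ (by positivity), add_mul, div_mul_cancel₀ _ (by positivity)]

theorem three_halves_pow_mul_pow_card_le (hl : 0 < l) {n : ℕ} {ε : ℝ}
    (hx : ∀ j < n, x j ⬝ᵥ x j ≤ 1)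
    (hwit : ∀ i < n, ∃ v : ι → ℝ, l * (v ⬝ᵥ v) ≤ ε ^ 2 ∧
      ∑ j ∈ range i, (x j ⬝ᵥ v) ^ 2 ≤ ε ^ 2 ∧ ε ^ 2 < (x i ⬝ᵥ v) ^ 2) :
    (3 / 2) ^ n * l ^ Fintype.card ι ≤ (l + n / Fintype.card ι) ^ Fintype.card ι := by
  refine (three_halves_pow_mul_le_det_regularizedGram hl fun k hk => ?_).trans
    (det_regularizedGram_le hl hx)
  obtain ⟨v, hvv, hsum, hvk⟩ := hwit k hk
  refine (posDef_regularizedGram hl k).half_lt_dotProduct_inv_mulVec (u := v) ?_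
  rw [dotProduct_regularizedGram_mulVec]
  linarith

end RegularizedGram

theorem le_of_three_halves_pow_mul_le {n d : ℕ} {ε l : ℝ} (hε : 0 < ε) (hε1 : ε ≤ 1)
    (hl : ε ^ 2 / 4 ≤ l) (h : (3 / 2) ^ n * l ^ d ≤ (l + n / d) ^ d) :
    (n : ℝ) ≤ 150 * (d * log (1 / ε) + d) := by
  rcases Nat.eq_zero_or_pos d with rfl | hd
  · have : n = 0 := by
      by_contra hn
      simp only [pow_zero, mul_one] at h
      linarith [one_lt_pow₀ (show (1 : ℝ) < 3 / 2 by norm_num) hn]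
    simp [this]
  have hl0 : 0 < l := lt_of_lt_of_le (by positivity) hl
  set t : ℝ := n / d
  have hbase : (l + t) / l ≤ (1 + 4 * t) / ε ^ 2 := by
    rw [div_le_div_iff₀ hl0 (by positivity)]
    nlinarith [show (0 : ℝ) ≤ t by positivity, pow_le_one₀ hε.le hε1 (n := 2)]
  have hpow : ((3 : ℝ) / 2) ^ n ≤ ((1 + 4 * t) / ε ^ 2) ^ d := by
    calc ((3 : ℝ) / 2) ^ n ≤ ((l + t) / l) ^ d := by
          rw [div_pow _ l, le_div_iff₀ (by positivity)]; exact h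
      _ ≤ ((1 + 4 * t) / ε ^ 2) ^ d := pow_le_pow_left₀ (by positivity) hbase d
  have hlog : n * log (3 / 2) ≤ d * (log (1 + 4 * t) + 2 * log (1 / ε)) := by
    have := log_le_log (by positivity) hpow
    rw [log_pow, log_pow, log_div (x := 1 + 4 * t) (by positivity) (by positivity),
      log_pow] at this
    convert this using 2
    rw [one_div, log_inv]
    push_cast
    ring
  have hlog32 : 1 / 3 ≤ log (3 / 2) := by
    have := one_sub_inv_le_log_of_pos (show (0 : ℝ) < 3 / 2 by norm_num)
    norm_num at this ⊢
    linarith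
  have hlog_le : log (1 + 4 * t) ≤ (1 + 4 * t) / 20 + 18 := by
    have h20 : log 20 ≤ 19 := by linarith [log_le_sub_one_of_pos (show (0 : ℝ) < 20 by norm_num)]
    have := log_le_sub_one_of_pos (show 0 < (1 + 4 * t) / 20 by positivity)
    rw [log_div (by positivity) (by norm_num)] at this
    linarith
  have hdt : (d : ℝ) * t = n := mul_div_cancel₀ _ (by positivity)
  have hL : 0 ≤ d * log (1 / ε) := mul_nonneg d.cast_nonneg (log_nonneg (one_le_one_div hε hε1))
  have : (n : ℝ) / 3 ≤ d / 20 + n / 5 + 18 * d + 2 * (d * log (1 / ε)) :=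
    calc (n : ℝ) / 3 ≤ n * log (3 / 2) := by nlinarith [n.cast_nonneg (α := ℝ)]
      _ ≤ d * (log (1 + 4 * t) + 2 * log (1 / ε)) := hlog
      _ ≤ d * ((1 + 4 * t) / 20 + 18 + 2 * log (1 / ε)) := by gcongr
      _ = _ := by rw [← hdt]; ring
  linarith

def unitLinearClass (E : Type*) [NormedAddCommGroup E] [InnerProductSpace ℝ E] :
    Set (E → ℝ) :=
  {f | ∃ w : E, ‖w‖ ≤ 1 ∧ f = fun x => inner ℝ w x}

theorem exists_of_not_epsDependent_unitLinearClass {E : Type*} [NormedAddCommGroup E]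
    [InnerProductSpace ℝ E] {ε : ℝ} {Z : List E} {y : E}
    (h : ¬ EpsDependent (unitLinearClass E) ε Z y) :
    ∃ v : E, ‖v‖ ≤ 2 ∧ (Z.map fun z => inner ℝ v z ^ 2).sum ≤ ε ^ 2 ∧ ε < |inner ℝ v y| := by
  simp only [EpsDependent, not_forall, not_le, exists_prop] at h
  obtain ⟨_, ⟨w, hw, rfl⟩, _, ⟨w', hw', rfl⟩, hZ, hy⟩ := h
  refine ⟨w - w', (norm_sub_le w w').trans (by linarith), ?_, by simpa [inner_sub_left] using hy⟩
  simpa [inner_sub_left] using (sqrt_le_iff.mp hZ).2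

theorem EuclideanSpace.ofLp_dotProduct_self {ι : Type*} [Fintype ι] (x : EuclideanSpace ℝ ι) :
    x.ofLp ⬝ᵥ x.ofLp = ‖x‖ ^ 2 :=
  real_inner_self_eq_norm_sq x

theorem exists_dotProduct_witness_of_not_epsDependent {ι : Type*} [Fintype ι] {ε : ℝ}
    (hε : 0 ≤ ε) {L : List (EuclideanSpace ℝ ι)} {i : ℕ} (hi : i < L.length)
    (h : ¬ EpsDependent (unitLinearClass _) ε (L.take i) (L.get ⟨i, hi⟩)) :
    ∃ v : ι → ℝ, v ⬝ᵥ v ≤ 4 ∧ ∑ j ∈ range i, ((L.getD j 0).ofLp ⬝ᵥ v) ^ 2 ≤ ε ^ 2 ∧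
      ε ^ 2 < ((L.getD i 0).ofLp ⬝ᵥ v) ^ 2 := by
  obtain ⟨v, hv, hsum, hvi⟩ := exists_of_not_epsDependent_unitLinearClass h
  refine ⟨v.ofLp, ?_, ?_, ?_⟩
  · rw [EuclideanSpace.ofLp_dotProduct_self]
    nlinarith [norm_nonneg v]
  · rwa [List.sum_map_take_eq_sum_range L _ 0 i hi.le] at hsum
  · rw [L.get_eq_getElem, ← List.getD_eq_getElem _ 0 hi] at hvi
    rw [← sq_abs ((L.getD i 0).ofLp ⬝ᵥ _)]
    exact pow_lt_pow_left₀ hvi hε two_ne_zero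

/-- The `ε`-eluder dimension of the class of bounded linear functions
`x ↦ ⟪w, x⟫` (with `‖w‖ ≤ 1`) on the unit ball of `ℝ^d` is at most
`O(d log(1/ε) + d)`: there is a universal constant `C` such that every eluder
sequence has length at most `C (d log(1/ε) + d)`. -/
theorem linear_class_eluder_dim_le :
    ∃ C : ℝ, 0 < C ∧
      ∀ (d : ℕ) (ε : ℝ), 0 < ε → ε < 1 →
        ∀ L : List (EuclideanSpace ℝ (Fin d)),
          (∀ x ∈ L, ‖x‖ ≤ 1) →
          EluderSeq
            {f | ∃ w : EuclideanSpace ℝ (Fin d), ‖w‖ ≤ 1 ∧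
                  f = fun x => (inner ℝ w x : ℝ)} ε L →
          (L.length : ℝ) ≤ C * (d * Real.log (1 / ε) + d) := by
  refine ⟨150, by norm_num, fun d ε hε hε1 L hL ⟨ε', hεε', hind⟩ => ?_⟩
  have hε' : 0 < ε' := hε.trans_le hεε'
  have hx : ∀ j < L.length, (L.getD j 0).ofLp ⬝ᵥ (L.getD j 0).ofLp ≤ 1 := fun j hj => by
    rw [EuclideanSpace.ofLp_dotProduct_self, List.getD_eq_getElem _ _ hj]
    exact pow_le_one₀ (norm_nonneg _) (hL _ (L.getElem_mem hj))
  have hwit (i : ℕ) (hi : i < L.length) : ∃ v : Fin d → ℝ, ε' ^ 2 / 4 * (v ⬝ᵥ v) ≤ ε' ^ 2 ∧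
      ∑ j ∈ range i, ((L.getD j 0).ofLp ⬝ᵥ v) ^ 2 ≤ ε' ^ 2 ∧
      ε' ^ 2 < ((L.getD i 0).ofLp ⬝ᵥ v) ^ 2 := by
    obtain ⟨v, hv, hsum, hvi⟩ :=
      exists_dotProduct_witness_of_not_epsDependent hε'.le hi (hind ⟨i, hi⟩)
    exact ⟨v, by nlinarith, hsum, hvi⟩
  simpa using le_of_three_halves_pow_mul_le hε hε1.le (by gcongr)
    (three_halves_pow_mul_pow_card_le (by positivity) hx hwit)
end

section
/- One-step KL potential bound for multiplicative weights: if |Â(s,a)| ≤ 4W, η·4W ≤ 1, and Σ_a π(a|s)Â(s,a) = 0, then for the update π'(a|s) ∝ π(a|s)exp(η Â(s,a)) and any distribution p over A: KL(p, π') − KL(p, π) ≤ −η Σ_a p(a) Â(s,a) + 16 η² W². -/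
lemma exp_le_quadratic {x : ℝ} (hx : |x| ≤ 1) : Real.exp x ≤ 1 + x + x ^ 2 := by
  have h := Real.exp_bound hx (n := 2) (by norm_num)
  have h2 : ∑ m ∈ Finset.range 2, x ^ m / m.factorial = 1 + x := by
    simp [Finset.sum_range_succ]
  rw [h2] at h
  have h3 : Real.exp x - (1 + x) ≤ |x| ^ 2 * ((2 : ℕ).succ / ((2 : ℕ).factorial * 2)) :=
    (abs_le.mp h).2
  have h4 : |x| ^ 2 = x ^ 2 := sq_abs x
  norm_num [Nat.factorial] at h3
  nlinarith [sq_nonneg x]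

/-- One-step KL potential bound for multiplicative weights: if `|Â(a)| ≤ 4W`,
`η·4W ≤ 1`, `Σ_a π(a) Â(a) = 0`, and `π'(a) ∝ π(a) exp(η Â(a))`, then for any
distribution `p` on the finite action set,
`KL(p, π') − KL(p, π) ≤ −η Σ_a p(a) Â(a) + 16 η² W²`. -/
theorem mw_one_step_kl_bound {A : Type*} [Fintype A]
    (W η : ℝ) (hW : 0 ≤ W) (hη : 0 ≤ η) (hη4 : η * (4 * W) ≤ 1)
    (Ahat π p : A → ℝ)
    (hπ : ∀ a, 0 < π a) (hπ1 : ∑ a, π a = 1)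
    (hp : ∀ a, 0 ≤ p a) (hp1 : ∑ a, p a = 1)
    (hb : ∀ a, |Ahat a| ≤ 4 * W) (hz : ∑ a, π a * Ahat a = 0)
    (π' : A → ℝ)
    (hπ' : ∀ a, π' a = π a * Real.exp (η * Ahat a) / ∑ b, π b * Real.exp (η * Ahat b)) :
    (∑ a, p a * Real.log (p a / π' a)) - (∑ a, p a * Real.log (p a / π a))
      ≤ -η * (∑ a, p a * Ahat a) + 16 * η ^ 2 * W ^ 2 := by
  have hA : Nonempty A := by
    rcases isEmpty_or_nonempty A with h | h
    · simp [Finset.univ_eq_empty] at hπ1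
    · exact h
  set Z := ∑ b, π b * Real.exp (η * Ahat b) with hZ
  have hZpos : 0 < Z :=
    Finset.sum_pos (fun a _ => mul_pos (hπ a) (Real.exp_pos _)) Finset.univ_nonempty
  -- pointwise rewrite of the KL difference
  have key : ∀ a, p a * Real.log (p a / π' a) - p a * Real.log (p a / π a)
      = p a * (Real.log Z - η * Ahat a) := by
    intro a
    rcases eq_or_lt_of_le (hp a) with h0 | h0
    · simp [← h0]
    · have hπa := hπ a
      have hexp := Real.exp_pos (η * Ahat a)
      rw [hπ' a, Real.log_div (ne_of_gt h0) (by positivity),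
        Real.log_div (ne_of_gt h0) (ne_of_gt hπa),
        Real.log_div (by positivity) (ne_of_gt hZpos),
        Real.log_mul (ne_of_gt hπa) (ne_of_gt hexp), Real.log_exp]
      ring
  have hsum : (∑ a, p a * Real.log (p a / π' a)) - (∑ a, p a * Real.log (p a / π a))
      = Real.log Z - η * ∑ a, p a * Ahat a := by
    rw [← Finset.sum_sub_distrib]
    simp_rw [key, mul_sub]
    rw [Finset.sum_sub_distrib, ← Finset.sum_mul, hp1, one_mul, Finset.mul_sum]
    congr 1
    apply Finset.sum_congr rfl
    intro a _
    ring
  rw [hsum]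
  -- bound log Z
  have hZle : Z ≤ 1 + 16 * η ^ 2 * W ^ 2 := by
    have hbd : ∀ a, π a * Real.exp (η * Ahat a)
        ≤ π a * (1 + η * Ahat a + (η * Ahat a) ^ 2) := by
      intro a
      apply mul_le_mul_of_nonneg_left _ (le_of_lt (hπ a))
      apply exp_le_quadratic
      rw [abs_mul, abs_of_nonneg hη]
      calc η * |Ahat a| ≤ η * (4 * W) := mul_le_mul_of_nonneg_left (hb a) hη
        _ ≤ 1 := hη4
    calc Z ≤ ∑ a, π a * (1 + η * Ahat a + (η * Ahat a) ^ 2) :=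
          Finset.sum_le_sum fun a _ => hbd a
      _ = (∑ a, π a) + η * (∑ a, π a * Ahat a) + η ^ 2 * ∑ a, π a * Ahat a ^ 2 := by
          rw [Finset.mul_sum, Finset.mul_sum, ← Finset.sum_add_distrib,
            ← Finset.sum_add_distrib]
          apply Finset.sum_congr rfl
          intro a _
          ring
      _ ≤ 1 + 16 * η ^ 2 * W ^ 2 := by
          rw [hπ1, hz]
          have : ∑ a, π a * Ahat a ^ 2 ≤ ∑ a, π a * (16 * W ^ 2) := by
            apply Finset.sum_le_sum
            intro a _
            apply mul_le_mul_of_nonneg_left _ (le_of_lt (hπ a))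
            have := hb a
            nlinarith [sq_abs (Ahat a), abs_nonneg (Ahat a)]
          rw [← Finset.sum_mul, hπ1, one_mul] at this
          nlinarith [sq_nonneg η]
  have hlog : Real.log Z ≤ 16 * η ^ 2 * W ^ 2 := by
    calc Real.log Z ≤ Z - 1 := Real.log_le_sub_one_of_pos hZpos
      _ ≤ 16 * η ^ 2 * W ^ 2 := by linarith
  linarith
end

section
/- Mixed-policy multiplicative weights bound: let π'_{t+1}(a|s) ∝ π'_t(a|s)exp(η Â_t(s,a)) and π_t = (1−α)π'_t + α·Unif(A), with Σ_a π_t(a|s)Â_t(s,a) = 0, |Â_t| ≤ 4W, η ≤ 1/(4W), α = 1/(1+√T), η = sqrt(log|A|/(16W²T)). Then for any comparator p: Σ_{t=0}^{T−1} Σ_a p(a) Â_t(s,a) ≤ 12W·sqrt(log(|A|)·T). -/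
/-!
Multiplicative weights, run on the auxiliary policy `π'`, with the potential
`Φ t = ∑ₐ p a * log (π' t a)`: each round `η ⟨p, Â t⟩ = Φ (t+1) - Φ t + log Z t`, while
`Φ T ≤ 0` and `Φ 0 = -log |A|`, so `η ∑ₜ ⟨p, Â t⟩ ≤ log |A| + ∑ₜ log Z t`. A second-order
expansion of `exp` gives `log Z t ≤ η ⟨π' t, Â t⟩ + (13/18) η² (4W)²`. Since the played policy
`π t` is centred, `(1 - α) ⟨π' t, Â t⟩ = -(α / |A|) ∑ₐ Â t a ≤ 4Wα`, and `α / (1 - α) = 1 / √T`.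
With the tuned `η` the right-hand side becomes `(31/18) log |A| + √(log |A|)`, which is at most
`3 log |A| = η · 12 W √(log |A| · T)` once `|A| ≥ 2`. For `|A| = 1` the comparator is the played
policy, so every term vanishes.
-/

open Finset

section

open Real

/- `13/18 = 1/2 + 2/9`, the remainder constant of `Real.exp_bound`. The final budget needs a
constant below `2 - 1/√(log 2) ≈ 0.8`, so `Real.abs_exp_sub_one_sub_id_le` (constant 1) is too
weak. -/
lemma exp_le_one_add_add_sq_of_abs_le_one {x : ℝ} (hx : |x| ≤ 1) :
    exp x ≤ 1 + x + 13 / 18 * x ^ 2 := by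
  have hbound := abs_le.mp (Real.exp_bound hx (n := 3) (by norm_num))
  have hcube : |x| ^ 3 ≤ x ^ 2 := by
    rw [← sq_abs x, pow_succ]
    exact mul_le_of_le_one_right (by positivity) hx
  norm_num [sum_range_succ, Nat.factorial] at hbound
  nlinarith [hbound.2]

lemma sum_mul_sq_le {A : Type*} [Fintype A] {w g : A → ℝ} {B : ℝ} (hw : ∀ a, 0 ≤ w a)
    (hw1 : ∑ a, w a = 1) (hg : ∀ a, |g a| ≤ B) : ∑ a, w a * g a ^ 2 ≤ B ^ 2 :=
  calc ∑ a, w a * g a ^ 2 ≤ ∑ a, w a * B ^ 2 := sum_le_sum fun a _ =>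
        mul_le_mul_of_nonneg_left (sq_le_sq' (abs_le.mp (hg a)).1 (abs_le.mp (hg a)).2) (hw a)
    _ = B ^ 2 := by rw [← sum_mul, hw1, one_mul]

lemma log_sum_mul_exp_le {A : Type*} [Fintype A] {w g : A → ℝ} {η : ℝ}
    (hw : ∀ a, 0 ≤ w a) (hw1 : ∑ a, w a = 1) (hηg : ∀ a, |η * g a| ≤ 1) :
    log (∑ a, w a * exp (η * g a))
      ≤ η * ∑ a, w a * g a + 13 / 18 * η ^ 2 * ∑ a, w a * g a ^ 2 := by
  have hZ : 0 < ∑ a, w a * exp (η * g a) := by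
    obtain ⟨a, -, ha⟩ := exists_lt_of_sum_lt (s := univ) (f := 0) (g := w) (by simp [hw1])
    exact sum_pos' (fun b _ => mul_nonneg (hw b) (exp_pos _).le)
      ⟨a, mem_univ a, mul_pos ha (exp_pos _)⟩
  calc log (∑ a, w a * exp (η * g a))
      ≤ ∑ a, w a * exp (η * g a) - 1 := log_le_sub_one_of_pos hZ
    _ ≤ ∑ a, w a * (1 + η * g a + 13 / 18 * (η * g a) ^ 2) - 1 := by
      gcongr with a
      · exact hw a
      · exact exp_le_one_add_add_sq_of_abs_le_one (hηg a)
    _ = η * ∑ a, w a * g a + 13 / 18 * η ^ 2 * ∑ a, w a * g a ^ 2 := by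
      have hexpand : ∀ a, w a * (1 + η * g a + 13 / 18 * (η * g a) ^ 2)
          = w a + η * (w a * g a) + 13 / 18 * η ^ 2 * (w a * g a ^ 2) := fun a => by ring
      simp only [hexpand, sum_add_distrib, ← mul_sum, hw1]
      ring

lemma sum_mul_exp_pos {A : Type*} [Fintype A] [Nonempty A] {w g : A → ℝ}
    (hw : ∀ a, 0 < w a) : 0 < ∑ a, w a * exp (g a) :=
  sum_pos (fun a _ => mul_pos (hw a) (exp_pos _)) univ_nonempty

def IsMultiplicativeWeights {A : Type*} [Fintype A] (η : ℝ) (g w : ℕ → A → ℝ) : Prop :=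
  ∀ t a, w (t + 1) a = w t a * exp (η * g t a) / ∑ b, w t b * exp (η * g t b)

namespace IsMultiplicativeWeights

variable {A : Type*} [Fintype A] {η : ℝ} {g w : ℕ → A → ℝ}

lemma pos [Nonempty A] (h : IsMultiplicativeWeights η g w) (h0 : ∀ a, 0 < w 0 a) (t : ℕ)
    (a : A) : 0 < w t a := by
  induction t generalizing a with
  | zero => exact h0 a
  | succ t ih =>
    rw [h t a]
    exact div_pos (mul_pos (ih a) (exp_pos _)) (sum_mul_exp_pos ih)

lemma sum_eq_one [Nonempty A] (h : IsMultiplicativeWeights η g w) (h0 : ∀ a, 0 < w 0 a)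
    (h1 : ∑ a, w 0 a = 1) (t : ℕ) : ∑ a, w t a = 1 := by
  cases t with
  | zero => exact h1
  | succ t =>
    simp only [h t, ← sum_div, div_self (sum_mul_exp_pos (h.pos h0 t)).ne']

lemma pos_of_uniform [Nonempty A] (h : IsMultiplicativeWeights η g w)
    (h0 : ∀ a, w 0 a = 1 / Fintype.card A) (t : ℕ) (a : A) : 0 < w t a :=
  h.pos (fun a => by rw [h0]; positivity) t a

lemma sum_eq_one_of_uniform [Nonempty A] (h : IsMultiplicativeWeights η g w)
    (h0 : ∀ a, w 0 a = 1 / Fintype.card A) (t : ℕ) : ∑ a, w t a = 1 :=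
  h.sum_eq_one (h.pos_of_uniform h0 0) (by simp [h0]) t

lemma log_succ [Nonempty A] (h : IsMultiplicativeWeights η g w) {t : ℕ}
    (hw : ∀ a, 0 < w t a) (a : A) :
    log (w (t + 1) a) = log (w t a) + η * g t a - log (∑ b, w t b * exp (η * g t b)) := by
  rw [h t a, log_div (mul_pos (hw a) (exp_pos _)).ne' (sum_mul_exp_pos hw).ne',
    log_mul (hw a).ne' (exp_pos _).ne', log_exp]

lemma regret_le [Nonempty A] (h : IsMultiplicativeWeights η g w)
    (h0 : ∀ a, w 0 a = 1 / Fintype.card A) {p : A → ℝ} (hp : ∀ a, 0 ≤ p a)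
    (hp1 : ∑ a, p a = 1) (T : ℕ) :
    η * ∑ t ∈ range T, ∑ a, p a * g t a
      ≤ log (Fintype.card A) + ∑ t ∈ range T, log (∑ b, w t b * exp (η * g t b)) := by
  set Φ : ℕ → ℝ := fun t => ∑ a, p a * log (w t a)
  have hstep : ∀ t, η * ∑ a, p a * g t a
      = Φ (t + 1) - Φ t + log (∑ b, w t b * exp (η * g t b)) := fun t => by
    have hterm : ∀ a, p a * log (w (t + 1) a) = p a * log (w t a) + η * (p a * g t a)
        - p a * log (∑ b, w t b * exp (η * g t b)) := fun a => by
      rw [h.log_succ (h.pos_of_uniform h0 t) a]; ring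
    simp only [Φ, hterm, sum_sub_distrib, sum_add_distrib, ← mul_sum, ← sum_mul, hp1]
    ring
  have hΦT : Φ T ≤ 0 :=
    sum_nonpos fun a _ => mul_nonpos_of_nonneg_of_nonpos (hp a) <| log_nonpos
      (h.pos_of_uniform h0 T a).le <| (single_le_sum (fun b _ => (h.pos_of_uniform h0 T b).le)
        (mem_univ a)).trans (h.sum_eq_one_of_uniform h0 T).le
  have hΦ0 : Φ 0 = -log (Fintype.card A) := by
    simp only [Φ, h0, one_div, log_inv, ← sum_mul, hp1]
    ring
  rw [mul_sum, sum_congr rfl fun t _ => hstep t, sum_add_distrib, sum_range_sub]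
  linarith

end IsMultiplicativeWeights

section Mixing

variable {A : Type*} [Fintype A] [Nonempty A] {w q : A → ℝ} {α : ℝ}

lemma sum_eq_one_of_mix (hmix : ∀ a, q a = (1 - α) * w a + α / Fintype.card A)
    (hw : ∑ a, w a = 1) : ∑ a, q a = 1 := by
  have hN : (Fintype.card A : ℝ) ≠ 0 := by positivity
  simp [hmix, sum_add_distrib, ← mul_sum, hw, mul_div_cancel₀ _ hN]

lemma sum_mul_le_of_mix {g : A → ℝ} {B : ℝ} (hα0 : 0 ≤ α) (hα1 : α < 1)
    (hmix : ∀ a, q a = (1 - α) * w a + α / Fintype.card A)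
    (hzero : ∑ a, q a * g a = 0) (hg : ∀ a, |g a| ≤ B) :
    ∑ a, w a * g a ≤ α / (1 - α) * B := by
  have hN : (0 : ℝ) < Fintype.card A := by exact_mod_cast Fintype.card_pos
  have hcentre : (1 - α) * ∑ a, w a * g a = -(α / Fintype.card A) * ∑ a, g a := by
    have := hzero
    simp only [hmix, add_mul, mul_assoc, sum_add_distrib, ← mul_sum] at this
    linarith
  have hsum : -∑ a, g a ≤ Fintype.card A * B :=
    calc -∑ a, g a ≤ ∑ a, |g a| := (neg_le_abs _).trans (abs_sum_le_sum_abs _ _)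
      _ ≤ ∑ _a : A, B := sum_le_sum fun a _ => hg a
      _ = Fintype.card A * B := by simp
  rw [div_mul_eq_mul_div, le_div_iff₀ (by linarith), mul_comm]
  calc (1 - α) * ∑ a, w a * g a = α / Fintype.card A * -∑ a, g a := by rw [hcentre]; ring
    _ ≤ α / Fintype.card A * (Fintype.card A * B) := by gcongr
    _ = α * B := by field_simp

lemma log_sum_mul_exp_le_of_mix {g : A → ℝ} {B η : ℝ} (hw : ∀ a, 0 ≤ w a)
    (hw1 : ∑ a, w a = 1) (hα0 : 0 ≤ α) (hα1 : α < 1)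
    (hmix : ∀ a, q a = (1 - α) * w a + α / Fintype.card A)
    (hzero : ∑ a, q a * g a = 0) (hg : ∀ a, |g a| ≤ B) (hη : 0 ≤ η) (hηB : η * B ≤ 1) :
    log (∑ a, w a * exp (η * g a)) ≤ η * (α / (1 - α) * B) + 13 / 18 * η ^ 2 * B ^ 2 := by
  have hηg : ∀ a, |η * g a| ≤ 1 := fun a => by
    rw [abs_mul, abs_of_nonneg hη]
    exact (mul_le_mul_of_nonneg_left (hg a) hη).trans hηB
  refine (log_sum_mul_exp_le hw hw1 hηg).trans ?_
  gcongr
  · exact sum_mul_le_of_mix hα0 hα1 hmix hzero hg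
  · exact sum_mul_sq_le hw hw1 hg

end Mixing

lemma sum_mul_eq_of_subsingleton {A : Type*} [Fintype A] [Subsingleton A] {p q g : A → ℝ}
    (hp : ∑ a, p a = 1) (hq : ∑ a, q a = 1) : ∑ a, p a * g a = ∑ a, q a * g a := by
  have hpq : p = q := funext fun a => by
    rw [← Fintype.sum_subsingleton p a, ← Fintype.sum_subsingleton q a, hp, hq]
  rw [hpq]

lemma sqrt_le_mul_of_log_two_le {L : ℝ} (hL : log 2 ≤ L) : √L ≤ 23 / 18 * L := by
  have h18 : 18 / 23 ≤ √L := by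
    rw [le_sqrt (by norm_num) (by linarith [log_two_gt_d9])]
    linarith [log_two_gt_d9]
  have hLl : L = √L * √L := (mul_self_sqrt (by linarith [log_two_gt_d9])).symm
  nlinarith

lemma tuned_regret_budget_le {T : ℕ} (hT : 0 < T) {L W α η : ℝ} (hL : log 2 ≤ L) (hW : 0 < W)
    (hα : α = 1 / (1 + √T)) (hη : η = √(L / (16 * W ^ 2 * T))) :
    L + T * (η * (α / (1 - α) * (4 * W)) + 13 / 18 * η ^ 2 * (4 * W) ^ 2)
      ≤ η * (12 * W * √(L * T)) := by
  have hs : 0 < √(T : ℝ) := sqrt_pos.mpr (by exact_mod_cast hT)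
  have hL0 : 0 ≤ L := by linarith [log_two_gt_d9]
  have hratio : α / (1 - α) = 1 / √T := by
    rw [hα]; field_simp [hs.ne']; ring
  have hηeq : η = √L / (4 * W * √T) := by
    rw [hη, sqrt_div hL0, show 16 * W ^ 2 * (T : ℝ) = (4 * W * √T) ^ 2 by
      rw [mul_pow, sq_sqrt (by positivity)]; ring, sqrt_sq (by positivity)]
  have hsq := sqrt_le_mul_of_log_two_le hL
  have hLl : L = √L ^ 2 := (sq_sqrt hL0).symm
  have hTs : (T : ℝ) = √T ^ 2 := (sq_sqrt (Nat.cast_nonneg T)).symm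
  rw [hratio, hηeq, sqrt_mul hL0]
  generalize √L = l at hsq hLl ⊢
  generalize √(T : ℝ) = s at hs hTs ⊢
  rw [hTs, hLl]
  calc _ = l ^ 2 + l + 13 / 18 * l ^ 2 := by field_simp; ring
    _ ≤ 3 * l ^ 2 := by linarith
    _ = _ := by field_simp; ring

end

theorem mixed_policy_mw_regret_general {A : Type*} [Fintype A] [Nonempty A]
    (T : ℕ) (hT : 0 < T) (W α η : ℝ) (hW : 0 < W)
    (hα : α = 1 / (1 + Real.sqrt T))
    (hη : η = Real.sqrt (Real.log (Fintype.card A) / (16 * W ^ 2 * T)))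
    (hη4 : η ≤ 1 / (4 * W))
    (Ahat : ℕ → A → ℝ) (π' π : ℕ → A → ℝ)
    (hπ'0 : ∀ a, π' 0 a = 1 / (Fintype.card A))
    (hupd : ∀ t a, π' (t + 1) a
      = π' t a * Real.exp (η * Ahat t a) / ∑ b, π' t b * Real.exp (η * Ahat t b))
    (hmix : ∀ t a, π t a = (1 - α) * π' t a + α / (Fintype.card A))
    (hbound : ∀ t a, |Ahat t a| ≤ 4 * W)
    (hzero : ∀ t, ∑ a, π t a * Ahat t a = 0)
    (p : A → ℝ) (hp : ∀ a, 0 ≤ p a) (hp1 : ∑ a, p a = 1) :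
    ∑ t ∈ Finset.range T, ∑ a, p a * Ahat t a
      ≤ 12 * W * Real.sqrt (Real.log (Fintype.card A) * T) := by
  have hmw : IsMultiplicativeWeights η Ahat π' := hupd
  have hw : ∀ t a, 0 ≤ π' t a := fun t a => (hmw.pos_of_uniform hπ'0 t a).le
  have hw1 : ∀ t, ∑ a, π' t a = 1 := hmw.sum_eq_one_of_uniform hπ'0
  rcases le_or_gt (Fintype.card A) 1 with hcard | hcard
  · have : Subsingleton A := Fintype.card_le_one_iff_subsingleton.mp hcard
    rw [le_antisymm hcard Fintype.card_pos, Nat.cast_one, Real.log_one, zero_mul,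
      Real.sqrt_zero, mul_zero]
    refine (sum_eq_zero fun t _ => ?_).le
    rw [sum_mul_eq_of_subsingleton hp1 (sum_eq_one_of_mix (hmix t) (hw1 t)), hzero t]
  have hlog : Real.log 2 ≤ Real.log (Fintype.card A) :=
    Real.log_le_log two_pos (by exact_mod_cast hcard)
  have hη0 : 0 < η := by
    rw [hη]
    exact Real.sqrt_pos.mpr (div_pos (by linarith [Real.log_two_gt_d9]) (by positivity))
  have hα0 : 0 ≤ α := by rw [hα]; positivity
  have hα1 : α < 1 := by
    rw [hα, div_lt_one (by positivity)]
    linarith [Real.sqrt_pos.mpr (Nat.cast_pos.mpr hT : (0 : ℝ) < T)]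
  have hηW : η * (4 * W) ≤ 1 := by rwa [le_div_iff₀ (by positivity)] at hη4
  refine le_of_mul_le_mul_left ?_ hη0
  calc η * ∑ t ∈ range T, ∑ a, p a * Ahat t a
      ≤ Real.log (Fintype.card A)
          + ∑ t ∈ range T, Real.log (∑ b, π' t b * Real.exp (η * Ahat t b)) :=
        hmw.regret_le hπ'0 hp hp1 T
    _ ≤ Real.log (Fintype.card A)
          + T * (η * (α / (1 - α) * (4 * W)) + 13 / 18 * η ^ 2 * (4 * W) ^ 2) := by
        grw [sum_le_sum fun t _ => log_sum_mul_exp_le_of_mix (hw t) (hw1 t) hα0 hα1 (hmix t)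
          (hzero t) (hbound t) hη0.le hηW, sum_const, card_range, nsmul_eq_mul]
    _ ≤ η * (12 * W * √(Real.log (Fintype.card A) * T)) :=
        tuned_regret_budget_le hT hlog hW hα hη

/-- Mixed-policy multiplicative weights bound: with auxiliary updates
`π'_{t+1}(a) ∝ π'_t(a) exp(η Â_t(a))` and played policy
`π_t = (1−α) π'_t + α·Unif(A)`, where `Σ_a π_t(a) Â_t(a) = 0`, `|Â_t| ≤ 4W`,
`η = sqrt(log|A|/(16W²T)) ≤ 1/(4W)` and `α = 1/(1+√T)`, any comparator `p`
satisfies `Σ_{t<T} Σ_a p(a) Â_t(a) ≤ 12W sqrt(log|A| · T)`. -/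
theorem mixed_policy_mw_regret {A : Type*} [Fintype A] [Nonempty A]
    (T : ℕ) (hT : 0 < T) (W α η : ℝ) (hW : 0 < W)
    (hα : α = 1 / (1 + Real.sqrt T))
    (hη : η = Real.sqrt (Real.log (Fintype.card A) / (16 * W ^ 2 * T)))
    (hη4 : η ≤ 1 / (4 * W))
    (Ahat : ℕ → A → ℝ) (π' π : ℕ → A → ℝ)
    (hπ'0 : ∀ a, π' 0 a = 1 / (Fintype.card A))
    (hπ'pos : ∀ t a, 0 < π' t a)
    (hupd : ∀ t a, π' (t + 1) a
      = π' t a * Real.exp (η * Ahat t a) / ∑ b, π' t b * Real.exp (η * Ahat t b))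
    (hmix : ∀ t a, π t a = (1 - α) * π' t a + α / (Fintype.card A))
    (hbound : ∀ t a, |Ahat t a| ≤ 4 * W)
    (hzero : ∀ t, ∑ a, π t a * Ahat t a = 0)
    (p : A → ℝ) (hp : ∀ a, 0 ≤ p a) (hp1 : ∑ a, p a = 1) :
    ∑ t ∈ Finset.range T, ∑ a, p a * Ahat t a
      ≤ 12 * W * Real.sqrt (Real.log (Fintype.card A) * T) :=
  mixed_policy_mw_regret_general T hT W α η hW hα hη hη4 Ahat π' π hπ'0 hupd hmix hbound hzero p hp
    hp1
end

section
/- Monotonicity of occupancy measures under an absorbing modification: let π̃ be a policy on MDP M and π̃ⁿ the policy on augmented MDP Mⁿ that equals π̃ on known states K and deterministically takes the self-loop action a† outside K. Then for every state s ∈ K (meaning (s,a) ∈ K for all a) and every action a ∈ A, the per-step state-action occupancy satisfies d̃_{Mⁿ,h}(s,a) ≤ d^{π̃}_h(s,a) for all steps h, and hence the discounted occupancies satisfy d̃_{Mⁿ}(s,a) ≤ d^{π̃}(s,a). -/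
/-- Monotonicity of occupancy measures under the absorbing modification: `dM`
is the per-step state distribution of the policy `π̃` in the original MDP with
transitions `P` and initial state `s0`; `dN` is that of the augmented policy in
the augmented MDP, which follows `π̃` on the known set `K` and takes the
self-loop action `a†` outside `K`.  Then for every fully-known state `s ∈ K`
and action `a`, the per-step state-action occupancies satisfy
`dN_h(s,a) ≤ dM_h(s,a)` for all `h`, and hence so do the discounted
occupancies. -/
theorem occupancy_monotone_absorbing {S : Type*} [Fintype S] [DecidableEq S]
    {A : Type*} [Fintype A]
    (K : Set S) [DecidablePred (· ∈ K)]
    (P : S → A → S → ℝ) (hP : ∀ s a s', 0 ≤ P s a s')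
    (hP1 : ∀ s a, ∑ s', P s a s' = 1)
    (πt : S → A → ℝ) (hπ : ∀ s a, 0 ≤ πt s a) (hπ1 : ∀ s, ∑ a, πt s a = 1)
    (γ : ℝ) (hγ0 : 0 < γ) (hγ1 : γ < 1)
    (s0 : S) (dM dN : ℕ → S → ℝ)
    (hM0 : ∀ s, dM 0 s = if s = s0 then 1 else 0)
    (hMstep : ∀ h s, dM (h + 1) s = ∑ s', ∑ a, dM h s' * πt s' a * P s' a s)
    (hN0 : ∀ s, dN 0 s = if s = s0 then 1 else 0)
    (hNstep : ∀ h s, dN (h + 1) s =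
      (∑ s', ∑ a, if s' ∈ K then dN h s' * πt s' a * P s' a s else 0)
        + if s ∉ K then dN h s else 0) :
    (∀ h : ℕ, ∀ s ∈ K, ∀ a : A, dN h s * πt s a ≤ dM h s * πt s a) ∧
    (∀ s ∈ K, ∀ a : A,
      (1 - γ) * ∑' h : ℕ, γ ^ h * (dN h s * πt s a)
        ≤ (1 - γ) * ∑' h : ℕ, γ ^ h * (dM h s * πt s a)) := by
  -- Nonnegativity of dM
  have hMnn : ∀ h s, 0 ≤ dM h s := by
    intro h
    induction h with
    | zero => intro s; rw [hM0]; positivity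
    | succ h ih =>
      intro s
      rw [hMstep]
      refine Finset.sum_nonneg fun s' _ => Finset.sum_nonneg fun a _ => ?_
      exact mul_nonneg (mul_nonneg (ih s') (hπ s' a)) (hP s' a s)
  -- Nonnegativity of dN
  have hNnn : ∀ h s, 0 ≤ dN h s := by
    intro h
    induction h with
    | zero => intro s; rw [hN0]; positivity
    | succ h ih =>
      intro s
      rw [hNstep]
      refine add_nonneg ?_ ?_
      · refine Finset.sum_nonneg fun s' _ => Finset.sum_nonneg fun a _ => ?_
        split
        · exact mul_nonneg (mul_nonneg (ih s') (hπ s' a)) (hP s' a s)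
        · exact le_refl 0
      · split
        · exact ih s
        · exact le_refl 0
  -- Per-step state monotonicity on K
  have key : ∀ h : ℕ, ∀ s ∈ K, dN h s ≤ dM h s := by
    intro h
    induction h with
    | zero => intro s _; rw [hM0, hN0]
    | succ h ih =>
      intro s hs
      rw [hMstep, hNstep]
      have : (if s ∉ K then dN h s else 0) = 0 := by simp [hs]
      rw [this, add_zero]
      refine Finset.sum_le_sum fun s' _ => Finset.sum_le_sum fun a _ => ?_
      by_cases hs' : s' ∈ K
      · simp only [hs', if_true]
        exact mul_le_mul_of_nonneg_right
          (mul_le_mul_of_nonneg_right (ih s' hs') (hπ s' a)) (hP s' a s)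
      · simp only [hs', if_false]
        exact mul_nonneg (mul_nonneg (hMnn h s') (hπ s' a)) (hP s' a s)
  have key2 : ∀ h : ℕ, ∀ s ∈ K, ∀ a : A, dN h s * πt s a ≤ dM h s * πt s a := by
    intro h s hs a
    exact mul_le_mul_of_nonneg_right (key h s hs) (hπ s a)
  refine ⟨key2, ?_⟩
  intro s hs a
  -- total mass of dM is 1
  have hMmass : ∀ h, ∑ s, dM h s = 1 := by
    intro h
    induction h with
    | zero => simp [hM0]
    | succ h ih =>
      simp only [hMstep]
      rw [Finset.sum_comm]
      have : ∀ s' ∈ Finset.univ (α := S),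
          ∑ s : S, ∑ a, dM h s' * πt s' a * P s' a s = dM h s' := by
        intro s' _
        rw [Finset.sum_comm]
        have : ∀ a ∈ Finset.univ (α := A),
            ∑ s : S, dM h s' * πt s' a * P s' a s = dM h s' * πt s' a := by
          intro a _
          rw [← Finset.mul_sum, hP1, mul_one]
        rw [Finset.sum_congr rfl this, ← Finset.mul_sum, hπ1, mul_one]
      rw [Finset.sum_congr rfl this, ih]
  have hMle1 : ∀ h, dM h s ≤ 1 := by
    intro h
    calc dM h s ≤ ∑ s', dM h s' :=
          Finset.single_le_sum (fun s' _ => hMnn h s') (Finset.mem_univ s)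
      _ = 1 := hMmass h
  have hπle1 : πt s a ≤ 1 := by
    calc πt s a ≤ ∑ a', πt s a' :=
          Finset.single_le_sum (fun a' _ => hπ s a') (Finset.mem_univ a)
      _ = 1 := hπ1 s
  have hγnn : 0 ≤ γ := le_of_lt hγ0
  have hsumM : Summable fun h : ℕ => γ ^ h * (dM h s * πt s a) := by
    refine Summable.of_nonneg_of_le (fun h => ?_) (fun h => ?_)
      (summable_geometric_of_lt_one hγnn hγ1)
    · exact mul_nonneg (pow_nonneg hγnn h) (mul_nonneg (hMnn h s) (hπ s a))
    · calc γ ^ h * (dM h s * πt s a) ≤ γ ^ h * 1 := by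
            refine mul_le_mul_of_nonneg_left ?_ (pow_nonneg hγnn h)
            exact mul_le_one₀ (hMle1 h) (hπ s a) hπle1
        _ = γ ^ h := mul_one _
  have hsumN : Summable fun h : ℕ => γ ^ h * (dN h s * πt s a) := by
    refine Summable.of_nonneg_of_le (fun h => ?_) (fun h => ?_) hsumM
    · exact mul_nonneg (pow_nonneg hγnn h) (mul_nonneg (hNnn h s) (hπ s a))
    · exact mul_le_mul_of_nonneg_left (key2 h s hs a) (pow_nonneg hγnn h)
  refine mul_le_mul_of_nonneg_left ?_ (by linarith)
  exact Summable.tsum_le_tsum (fun h => mul_le_mul_of_nonneg_left (key2 h s hs a)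
    (pow_nonneg hγnn h)) hsumN hsumM
end
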